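/- Let S be an asynchronous state space Φ-dynamical system, with (w1,x1), (w2,x2) ∈ B_S, (γ1,τ1) ∈ Φ(w1), (γ2,τ2) ∈ Φ(w2), t1, t2 times with x1(t1) = x2(t2), and set k1 = τ1(t1), k2 = τ2(t2). Define w3 = w2 ∧_{t2}^{t1} w1, x3 = x2 ∧_{t2}^{t1} x1, τ3 = τ2 ∧_{t2}^{t1} (τ1 + (k2 − k1)), γ3 = γ2 ∧_{k2}^{k1} γ1. Then (w3,x3) ∈ B_S, (γ3,τ3) ∈ Φ(w3), x3(t2) = x2(t2) = x1(t1), x3 agrees with x2 strictly before t2, and for all k ≥ k2 and t1' ∈ τ1⁻¹(k − k2 + k1) with t1' > t1, the point t3' = t1' − t1 + t2 satisfies t3' ∈ τ3⁻¹(k), t3' > t2, and x3(t3') = x1(t1'). -/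
import Mathlib


open Set

/-- Concatenation of signals:
`(f ∧_{a}^{b} g)(t) = f t` for `t < a` and `g (t - a + b)` for `t ≥ a`. -/
noncomputable def concatSig {A : Type*} (f g : ℝ → A) (a b : ℝ) : ℝ → A :=
  fun t => if t < a then f t else g (t - a + b)

/-- A state space Φ-dynamical system with internal time axis `ℝ`,
external time axis `ℝ` (subsets of which are used where relevant),
signal space `W`, state space `X` and external signal space `Γ`.
`Phi` maps internal signals to sets of pairs (external signal, time
scale transformation). -/
structure PhiSys (W X Γ : Type*) where
  Beh : Set ((ℝ → W) × (ℝ → X))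
  Phi : (ℝ → W) → Set ((ℝ → Γ) × (ℝ → ℝ))

namespace PhiSys

variable {W X Γ : Type*}

/-- States reachable at internal time `t`. -/
def Xt (S : PhiSys W X Γ) (t : ℝ) : Set X :=
  {ξ | ∃ w x, (w, x) ∈ S.Beh ∧ x t = ξ}

/-- States reachable at external time `k`. -/
def Xk (S : PhiSys W X Γ) (k : ℝ) : Set X :=
  {ξ | ∃ w x γ τ t, (w, x) ∈ S.Beh ∧ (γ, τ) ∈ S.Phi w ∧ τ t = k ∧ x t = ξ}

/-- Internal time-indexed reachable state space. -/
def XT (S : PhiSys W X Γ) : Set X := ⋃ t : ℝ, S.Xt t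

/-- External time-indexed reachable state space, over external time axis `E`. -/
def XK (S : PhiSys W X Γ) (E : Set ℝ) : Set X := ⋃ k ∈ E, S.Xk k

/-- The external behavior of the system. -/
def BehE (S : PhiSys W X Γ) : Set (ℝ → Γ) :=
  {γ | ∃ w x τ, (w, x) ∈ S.Beh ∧ (γ, τ) ∈ S.Phi w}

/-- Asynchronous state space Φ-dynamical system: closure under concatenation
of state-matching trajectories at arbitrary internal/external time pairs. -/
def IsAsync (S : PhiSys W X Γ) : Prop :=
  ∀ w1 x1 w2 x2 t1 t2 γ1 τ1 γ2 τ2,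
    (w1, x1) ∈ S.Beh → (w2, x2) ∈ S.Beh →
    (γ1, τ1) ∈ S.Phi w1 → (γ2, τ2) ∈ S.Phi w2 →
    x1 t1 = x2 t2 →
    (concatSig w1 w2 t1 t2, concatSig x1 x2 t1 t2) ∈ S.Beh ∧
    (concatSig γ1 γ2 (τ1 t1) (τ2 t2),
      concatSig τ1 (fun t => τ2 t + (τ1 t1 - τ2 t2)) t1 t2)
      ∈ S.Phi (concatSig w1 w2 t1 t2)

/-- Externally synchronous state space Φ-dynamical system:
the closure property is required only when `τ1 t1 = τ2 t2`. -/
def IsExtSync (S : PhiSys W X Γ) : Prop :=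
  ∀ w1 x1 w2 x2 t1 t2 γ1 τ1 γ2 τ2,
    (w1, x1) ∈ S.Beh → (w2, x2) ∈ S.Beh →
    (γ1, τ1) ∈ S.Phi w1 → (γ2, τ2) ∈ S.Phi w2 →
    x1 t1 = x2 t2 → τ1 t1 = τ2 t2 →
    (concatSig w1 w2 t1 t2, concatSig x1 x2 t1 t2) ∈ S.Beh ∧
    (concatSig γ1 γ2 (τ1 t1) (τ2 t2),
      concatSig τ1 (fun t => τ2 t + (τ1 t1 - τ2 t2)) t1 t2)
      ∈ S.Phi (concatSig w1 w2 t1 t2)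

/-- Synchronous state space Φ-dynamical system:
the closure property is required only when `t1 = t2` and `τ1 t1 = τ2 t2`. -/
def IsSync (S : PhiSys W X Γ) : Prop :=
  ∀ w1 x1 w2 x2 t1 t2 γ1 τ1 γ2 τ2,
    (w1, x1) ∈ S.Beh → (w2, x2) ∈ S.Beh →
    (γ1, τ1) ∈ S.Phi w1 → (γ2, τ2) ∈ S.Phi w2 →
    x1 t1 = x2 t2 → t1 = t2 → τ1 t1 = τ2 t2 →
    (concatSig w1 w2 t1 t2, concatSig x1 x2 t1 t2) ∈ S.Beh ∧
    (concatSig γ1 γ2 (τ1 t1) (τ2 t2),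
      concatSig τ1 (fun t => τ2 t + (τ1 t1 - τ2 t2)) t1 t2)
      ∈ S.Phi (concatSig w1 w2 t1 t2)

end PhiSys

/-- The transfer condition (*) of simulation relations, parametrized by a
restriction `cond t1 t2 k1 k2` on the internal/external time pairs. -/
def Transfer {W1 X1 W2 X2 Γ : Type*} (S1 : PhiSys W1 X1 Γ) (S2 : PhiSys W2 X2 Γ)
    (R : Set (X1 × X2)) (cond : ℝ → ℝ → ℝ → ℝ → Prop) : Prop :=
  ∀ w1 x1 w' x' γ1 τ1 γ' τ' t1 t2,
    (w1, x1) ∈ S1.Beh → (w', x') ∈ S2.Beh →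
    (γ1, τ1) ∈ S1.Phi w1 → (γ', τ') ∈ S2.Phi w' →
    (x1 t1, x' t2) ∈ R → cond t1 t2 (τ1 t1) (τ' t2) →
    ∃ w2 x2 γ2 τ2,
      (w2, x2) ∈ S2.Beh ∧ (γ2, τ2) ∈ S2.Phi w2 ∧
      γ2 = concatSig γ' γ1 (τ' t2) (τ1 t1) ∧
      (∀ t < t2, w2 t = w' t ∧ x2 t = x' t ∧ τ2 t = τ' t) ∧
      x2 t2 = x' t2 ∧
      (∀ k, τ' t2 ≤ k → ∀ t1', τ1 t1' = k - τ' t2 + τ1 t1 → t1 < t1' →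
        ∃ t2', τ2 t2' = k ∧ t2 < t2' ∧ (x1 t1', x2 t2') ∈ R)

/-- Asynchronous simulation relation from `S1` to `S2`
(external time axis `E`). -/
def AsyncSim {W1 X1 W2 X2 Γ : Type*} (S1 : PhiSys W1 X1 Γ) (S2 : PhiSys W2 X2 Γ)
    (E : Set ℝ) (R : Set (X1 × X2)) : Prop :=
  (∀ ξ1 ∈ S1.XK E, ∃ ξ2 ∈ S2.XK E, (ξ1, ξ2) ∈ R) ∧
  Transfer S1 S2 R (fun _ _ _ _ => True)

/-- Externally synchronous simulation relation from `S1` to `S2`. -/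
def ExtSyncSim {W1 X1 W2 X2 Γ : Type*} (S1 : PhiSys W1 X1 Γ) (S2 : PhiSys W2 X2 Γ)
    (E : Set ℝ) (R : Set (X1 × X2)) : Prop :=
  (∀ k ∈ E, ∀ ξ1 ∈ S1.Xk k, ∃ ξ2 ∈ S2.Xk k, (ξ1, ξ2) ∈ R) ∧
  Transfer S1 S2 R (fun _ _ k1 k2 => k1 = k2)

/-- Synchronous simulation relation from `S1` to `S2`
(common internal time axis). -/
def SyncSim {W1 X1 W2 X2 Γ : Type*} (S1 : PhiSys W1 X1 Γ) (S2 : PhiSys W2 X2 Γ)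
    (R : Set (X1 × X2)) : Prop :=
  (∀ t : ℝ, ∀ ξ1 ∈ S1.Xt t, ∃ ξ2 ∈ S2.Xt t, (ξ1, ξ2) ∈ R) ∧
  Transfer S1 S2 R (fun t1 t2 k1 k2 => t1 = t2 ∧ k1 = k2)

/-- `ν`-initial simulation relation from `S1` to `S2`. -/
def InitSim {W1 X1 W2 X2 Γ : Type*} (S1 : PhiSys W1 X1 Γ) (S2 : PhiSys W2 X2 Γ)
    (ν : ℝ) (R : Set (X1 × X2)) : Prop :=
  (∀ ξ1 ∈ S1.Xk ν, ∃ ξ2 ∈ S2.Xk ν, (ξ1, ξ2) ∈ R) ∧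
  Transfer S1 S2 R (fun _ _ _ _ => True)

/-- Inverse of a relation. -/
def relInv {A B : Type*} (R : Set (A × B)) : Set (B × A) := {p | (p.2, p.1) ∈ R}

/-- Composition of relations. -/
def relComp {A B C : Type*} (R : Set (A × B)) (Q : Set (B × C)) : Set (A × C) :=
  {p | ∃ b, (p.1, b) ∈ R ∧ (b, p.2) ∈ Q}

/-- Witness construction for reflexivity of asynchronous similarity: in an
asynchronous system, concatenating at state-matching points yields a
trajectory in the behavior whose external data are the corresponding
concatenations, which agrees with the second trajectory strictly before
`t2`, matches at `t2`, and reproduces the future of the first trajectory at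
the shifted times. -/
theorem async_concat_witness {W X Γ : Type*} (S : PhiSys W X Γ)
    (hS : S.IsAsync) (w1 w2 : ℝ → W) (x1 x2 : ℝ → X)
    (γ1 γ2 : ℝ → Γ) (τ1 τ2 : ℝ → ℝ) (t1 t2 : ℝ)
    (h1 : (w1, x1) ∈ S.Beh) (h2 : (w2, x2) ∈ S.Beh)
    (hγ1 : (γ1, τ1) ∈ S.Phi w1) (hγ2 : (γ2, τ2) ∈ S.Phi w2)
    (hx : x1 t1 = x2 t2)
    (k1 : ℝ) (hk1 : k1 = τ1 t1) (k2 : ℝ) (hk2 : k2 = τ2 t2)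
    (w3 : ℝ → W) (hw3 : w3 = concatSig w2 w1 t2 t1)
    (x3 : ℝ → X) (hx3 : x3 = concatSig x2 x1 t2 t1)
    (τ3 : ℝ → ℝ) (hτ3 : τ3 = concatSig τ2 (fun t => τ1 t + (k2 - k1)) t2 t1)
    (γ3 : ℝ → Γ) (hγ3 : γ3 = concatSig γ2 γ1 k2 k1) :
    (w3, x3) ∈ S.Beh ∧ (γ3, τ3) ∈ S.Phi w3 ∧
    x3 t2 = x2 t2 ∧ x3 t2 = x1 t1 ∧
    (∀ t < t2, x3 t = x2 t) ∧
    (∀ k, k2 ≤ k → ∀ t1', τ1 t1' = k - k2 + k1 → t1 < t1' →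
      τ3 (t1' - t1 + t2) = k ∧ t2 < t1' - t1 + t2 ∧
      x3 (t1' - t1 + t2) = x1 t1') := by
  obtain ⟨hB, hP⟩ := hS w2 x2 w1 x1 t2 t1 γ2 τ2 γ1 τ1 h2 h1 hγ2 hγ1 hx.symm
  subst hk1 hk2 hw3 hx3 hτ3 hγ3
  refine ⟨hB, hP, ?_, ?_, ?_, ?_⟩
  · simp [concatSig, hx]
  · simp [concatSig]
  · intro t ht; simp [concatSig, ht]
  · intro k hk t1' hτ ht1
    have hlt : t2 < t1' - t1 + t2 := by linarith
    have hnlt : ¬ (t1' - t1 + t2 < t2) := by linarith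
    refine ⟨?_, hlt, ?_⟩
    · simp only [concatSig, if_neg hnlt]
      have : t1' - t1 + t2 - t2 + t1 = t1' := by ring
      rw [this, hτ]; ring
    · simp only [concatSig, if_neg hnlt]
      congr 1; ring
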